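/- arXiv:2104.09665 — 3 statements merged into one kernel-verified Lean document; each statement's English description precedes it below -/
import Mathlib

section
/- Let f and g be homogeneous polynomials in d variables of degrees m₁ and m₂ respectively. Then the Euclidean (L²) norm of the coefficient vector of the product fg satisfies ‖v(fg)‖ ≤ ‖v(f)‖·‖v(g)‖, where v(p) denotes the vector obtained by flattening the unique symmetric coefficient tensor T(p) satisfying ⟨T(p), X^{⊗deg p}⟩ = p(X). -/
open MvPolynomial

/-- The exponent (monomial) associated to an index tuple `w : Fin k → Fin d`. -/
noncomputable def expOf {d k : ℕ} (w : Fin k → Fin d) : Fin d →₀ ℕ := ∑ i, Finsupp.single (w i) 1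

/-- The number of index tuples giving the same monomial as `w`. -/
noncomputable def countOf {d k : ℕ} (w : Fin k → Fin d) : ℕ :=
  Nat.card {w' : Fin k → Fin d // expOf w' = expOf w}

/-- Entry of the flattened symmetric coefficient tensor of a homogeneous degree-`k`
polynomial `f`: the coefficient of the corresponding monomial divided evenly among
all index tuples producing it.  This is the unique symmetric tensor `T(f)` with
`⟨T(f), X^{⊗k}⟩ = f(X)`, flattened into a vector indexed by `Fin k → Fin d`. -/
noncomputable def coeffVecEntry {d : ℕ} (k : ℕ) (f : MvPolynomial (Fin d) ℝ)
    (w : Fin k → Fin d) : ℝ :=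
  f.coeff (expOf w) / (countOf w)

/-- Euclidean norm `‖v(f)‖` of the flattened symmetric coefficient tensor of `f`,
viewed as a homogeneous polynomial of degree `k`. -/
noncomputable def vnorm {d : ℕ} (k : ℕ) (f : MvPolynomial (Fin d) ℝ) : ℝ :=
  Real.sqrt (∑ w : Fin k → Fin d, (coeffVecEntry k f w)^2)

/-!
Write `a ⊗ b` for the flattened tensor product of `v(f)` and `v(g)`. Since
`⟨a ⊗ b, X^{⊗(m₁+m₂)}⟩ = f(X) g(X)`, the coefficient of a monomial in `fg` is the sum of the
entries of `a ⊗ b` over the index tuples producing that monomial, so `v(fg)` is obtained from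
`a ⊗ b` by averaging over these fibres. Averaging over the fibres of a map is an orthogonal
projection, hence does not increase the Euclidean norm, and `‖a ⊗ b‖ = ‖a‖ ‖b‖`.
-/

open Finset

section FiberAverage

variable {ι κ : Type*} [Fintype ι] [DecidableEq κ] (e : ι → κ)

noncomputable def fiberAvg (A : ι → ℝ) (i : ι) : ℝ :=
  (∑ j with e j = e i, A j) / #{j | e j = e i}

lemma card_fiber_pos (i : ι) : 0 < #{j | e j = e i} :=
  card_pos.2 ⟨i, by simp⟩

lemma sum_fiberAvg (A : ι → ℝ) : ∑ i, fiberAvg e A i = ∑ i, A i := by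
  calc ∑ i, fiberAvg e A i
      = ∑ i, ∑ j with e j = e i, A j / #{l | e l = e j} := by
        refine sum_congr rfl fun i _ => ?_
        rw [fiberAvg, sum_div]
        refine sum_congr rfl fun j hj => ?_
        rw [(mem_filter.1 hj).2]
    _ = ∑ j, ∑ i with e i = e j, A j / #{l | e l = e j} := by
        simp only [sum_filter]
        rw [sum_comm]
        simp only [eq_comm]
    _ = ∑ j, A j := by
        refine sum_congr rfl fun j _ => ?_
        have hpos : (0 : ℝ) < #{l | e l = e j} := by exact_mod_cast card_fiber_pos e j
        rw [sum_const, nsmul_eq_mul, mul_div_cancel₀ _ hpos.ne']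

lemma fiberAvg_sq_le (A : ι → ℝ) (i : ι) :
    fiberAvg e A i ^ 2 ≤ fiberAvg e (fun j => A j ^ 2) i := by
  have hpos : (0 : ℝ) < #{j | e j = e i} := by exact_mod_cast card_fiber_pos e i
  have hcs := sq_sum_le_card_mul_sum_sq (s := {j | e j = e i}) (f := A)
  rw [fiberAvg, fiberAvg, div_pow, div_le_div_iff₀ (by positivity) hpos]
  calc (∑ j with e j = e i, A j) ^ 2 * #{j | e j = e i}
      ≤ (#{j | e j = e i} * ∑ j with e j = e i, A j ^ 2) * #{j | e j = e i} := by gcongr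
    _ = (∑ j with e j = e i, A j ^ 2) * (#{j | e j = e i} : ℝ) ^ 2 := by ring

lemma sum_sq_fiberAvg_le (A : ι → ℝ) : ∑ i, fiberAvg e A i ^ 2 ≤ ∑ i, A i ^ 2 :=
  (sum_le_sum fun i _ => fiberAvg_sq_le e A i).trans_eq (sum_fiberAvg e _)

end FiberAverage

section IndexTuples

variable {d : ℕ}

lemma countOf_eq_card {k : ℕ} (w : Fin k → Fin d) :
    countOf w = #{w' : Fin k → Fin d | expOf w' = expOf w} := by
  rw [countOf, Nat.card_eq_fintype_card, Fintype.card_subtype]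

lemma degree_expOf {k : ℕ} (w : Fin k → Fin d) : (expOf w).degree = k := by
  simp [expOf, map_sum]

lemma expOf_append {m n : ℕ} (u : Fin m → Fin d) (v : Fin n → Fin d) :
    expOf (Fin.append u v) = expOf u + expOf v := by
  simp [expOf, Fin.sum_univ_add]

lemma expOf_eq_toFinsupp {k : ℕ} (w : Fin k → Fin d) :
    expOf w = Multiset.toFinsupp (univ.val.map w) := by
  rw [expOf, ← Multiset.sum_map_singleton (univ.val.map w), Multiset.map_map, map_multiset_sum,
    Multiset.map_map]
  simp [Function.comp_def, Multiset.toFinsupp_singleton, Finset.sum_eq_multiset_sum]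

lemma exists_expOf_eq {k : ℕ} {β : Fin d →₀ ℕ} (hβ : β.degree = k) :
    ∃ w : Fin k → Fin d, expOf w = β := by
  set l := (Finsupp.toMultiset β).toList
  have hl : l.length = k := by
    simp [l, Finsupp.card_toMultiset, ← hβ, Finsupp.degree_eq_sum, Finsupp.sum_fintype]
  refine ⟨fun i => l.get (Fin.cast hl.symm i), ?_⟩
  rw [expOf_eq_toFinsupp, Multiset.toFinsupp_eq_iff, Fin.univ_val_map, ← List.ofFn_congr hl,
    List.ofFn_get, Multiset.coe_toList]

def tensorProd {m n : ℕ} (a : (Fin m → Fin d) → ℝ) (b : (Fin n → Fin d) → ℝ)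
    (w : Fin (m + n) → Fin d) : ℝ :=
  a (fun i => w (Fin.castAdd n i)) * b (fun i => w (Fin.natAdd m i))

lemma sum_sq_tensorProd {m n : ℕ} (a : (Fin m → Fin d) → ℝ) (b : (Fin n → Fin d) → ℝ) :
    ∑ w, tensorProd a b w ^ 2 = (∑ u, a u ^ 2) * ∑ v, b v ^ 2 := by
  rw [sum_mul_sum, ← Fintype.sum_prod_type', ← (Fin.appendEquiv m n).sum_comp]
  refine Fintype.sum_congr _ _ fun p => ?_
  simp only [Fin.appendEquiv, Equiv.coe_fn_mk, tensorProd, Fin.append_left, Fin.append_right,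
    mul_pow]

/-- The polynomial `⟨T, X^{⊗k}⟩` of a flattened `d × ⋯ × d` tensor `T`, not necessarily
symmetric. -/
noncomputable def tensorPoly {k : ℕ} (T : (Fin k → Fin d) → ℝ) : MvPolynomial (Fin d) ℝ :=
  ∑ w, monomial (expOf w) (T w)

lemma coeff_tensorPoly {k : ℕ} (T : (Fin k → Fin d) → ℝ) (β : Fin d →₀ ℕ) :
    (tensorPoly T).coeff β = ∑ w with expOf w = β, T w := by
  simp [tensorPoly, coeff_sum, coeff_monomial, sum_filter]

lemma coeffVecEntry_tensorPoly {k : ℕ} (T : (Fin k → Fin d) → ℝ) :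
    coeffVecEntry k (tensorPoly T) = fiberAvg expOf T := by
  ext w
  rw [coeffVecEntry, coeff_tensorPoly, countOf_eq_card, fiberAvg]

lemma tensorPoly_coeffVecEntry {k : ℕ} {f : MvPolynomial (Fin d) ℝ} (hf : f.IsHomogeneous k) :
    tensorPoly (coeffVecEntry k f) = f := by
  ext β
  rw [coeff_tensorPoly]
  by_cases hβ : β.degree = k
  · obtain ⟨w, rfl⟩ := exists_expOf_eq hβ
    have hpos : (0 : ℝ) < countOf w := by
      rw [countOf_eq_card]
      exact_mod_cast card_fiber_pos expOf w
    have hconst : ∀ w' ∈ ({w' | expOf w' = expOf w} : Finset _),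
        coeffVecEntry k f w' = coeffVecEntry k f w := fun w' hw' => by
      simp only [coeffVecEntry, countOf, (mem_filter.1 hw').2]
    rw [sum_congr rfl hconst, sum_const, nsmul_eq_mul, ← countOf_eq_card, coeffVecEntry,
      mul_div_cancel₀ _ hpos.ne']
  · rw [hf.coeff_eq_zero hβ, sum_eq_zero]
    intro w hw
    exact absurd ((mem_filter.1 hw).2 ▸ degree_expOf w) hβ

lemma tensorPoly_tensorProd {m n : ℕ} (a : (Fin m → Fin d) → ℝ) (b : (Fin n → Fin d) → ℝ) :
    tensorPoly (tensorProd a b) = tensorPoly a * tensorPoly b := by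
  rw [tensorPoly, tensorPoly, tensorPoly, sum_mul_sum, ← Fintype.sum_prod_type',
    ← (Fin.appendEquiv m n).sum_comp]
  refine Fintype.sum_congr _ _ fun p => ?_
  simp only [Fin.appendEquiv, Equiv.coe_fn_mk, tensorProd, expOf_append, Fin.append_left,
    Fin.append_right, monomial_mul]

end IndexTuples

/-- For homogeneous polynomials `f, g` of degrees `m₁, m₂`:
`‖v(fg)‖ ≤ ‖v(f)‖ · ‖v(g)‖`. -/
theorem vnorm_mul_le {d m₁ m₂ : ℕ} (f g : MvPolynomial (Fin d) ℝ)
    (hf : f.IsHomogeneous m₁) (hg : g.IsHomogeneous m₂) :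
    vnorm (m₁ + m₂) (f * g) ≤ vnorm m₁ f * vnorm m₂ g := by
  set a := coeffVecEntry m₁ f
  set b := coeffVecEntry m₂ g
  have hfg : f * g = tensorPoly (tensorProd a b) := by
    rw [tensorPoly_tensorProd, tensorPoly_coeffVecEntry hf, tensorPoly_coeffVecEntry hg]
  rw [vnorm, vnorm, vnorm, ← Real.sqrt_mul (by positivity), hfg, coeffVecEntry_tensorPoly,
    ← sum_sq_tensorProd]
  exact Real.sqrt_le_sqrt (sum_sq_fiberAvg_le expOf _)
end

section
/- Let f: R^d → R be a function with sufficient decay (e.g., f(z)·e^{c‖z‖} integrable for all c). Define the adjusted characteristic function f̃(X) = ∫_{R^d} f(z)·exp(i z·X + (1/2)‖X‖²) dz. Then f̃(X) = Σ_{m=0}^∞ (i^m/m!)·h_{m,f}(X), where h_{m,f}(X) = ∫_{R^d} f(z)·H_m(X,z) dz are the Hermite moment polynomials of f. -/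
/-!
Write `exp (t x - t² y²/2) = exp (t x) · exp (-t² y²/2)` as a Cauchy product of power series in `t`:
the coefficients obey the three-term recurrence of `𝓗_m`, so
`∑ tᵐ/m! 𝓗_m(x, y²) = exp (t x - t² y²/2)`, which at `t = i` is the key identity. The same
recurrence gives `|𝓗_m(x, y²)| ≤ 𝓗_m(|x|, -|y²|)`, whose generating series at `t = 1` is
`exp (|x| + |y²|/2)`. As `|z·X| ≤ C‖z‖`, the decay of `f` makes `|f z| exp (|z·X| + ‖X‖²/2)` an
integrable majorant, and dominated convergence exchanges sum and integral.
-/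

open MeasureTheory

/-- Homogenized probabilist's Hermite polynomials `𝓗_m(x, y²)` (second argument is `y²`). -/
noncomputable def hermite2 : ℕ → ℝ → ℝ → ℝ
  | 0, _, _ => 1
  | 1, x, _ => x
  | (m+2), x, y2 => x * hermite2 (m+1) x y2 - (m+1 : ℝ) * y2 * hermite2 m x y2

open Finset
open scoped Nat

theorem cast_add_two_mul_sum_antidiagonal {R : Type*} [CommSemiring R] {u w : ℕ → R} {α β : R}
    (hu : ∀ j : ℕ, ((j : R) + 1) * u (j + 1) = α * u j) (hw₁ : w 1 = 0)
    (hw : ∀ n : ℕ, ((n : R) + 2) * w (n + 2) = β * w n) (m : ℕ) :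
    ((m : R) + 2) * ∑ p ∈ antidiagonal (m + 2), u p.1 * w p.2 =
      α * ∑ p ∈ antidiagonal (m + 1), u p.1 * w p.2 +
        β * ∑ p ∈ antidiagonal m, u p.1 * w p.2 := by
  have hfst : ∑ p ∈ antidiagonal (m + 2), (p.1 : R) * (u p.1 * w p.2) =
      α * ∑ p ∈ antidiagonal (m + 1), u p.1 * w p.2 := by
    rw [Nat.sum_antidiagonal_succ, mul_sum]
    simp only [Nat.cast_zero, zero_mul, zero_add, Nat.cast_succ]
    refine sum_congr rfl fun p _ => ?_
    rw [← mul_assoc, hu, mul_assoc]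
  have hsnd : ∑ p ∈ antidiagonal (m + 2), (p.2 : R) * (u p.1 * w p.2) =
      β * ∑ p ∈ antidiagonal m, u p.1 * w p.2 := by
    rw [Nat.sum_antidiagonal_succ', Nat.sum_antidiagonal_succ', mul_sum]
    simp only [Nat.cast_zero, zero_mul, zero_add, Nat.cast_succ, hw₁, mul_zero, add_assoc,
      one_add_one_eq_two]
    refine sum_congr rfl fun p _ => ?_
    rw [← mul_assoc, mul_right_comm, Nat.cast_add, Nat.cast_two, hw]
    ring
  calc ((m : R) + 2) * ∑ p ∈ antidiagonal (m + 2), u p.1 * w p.2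
      = ∑ p ∈ antidiagonal (m + 2), ((p.1 : R) + p.2) * (u p.1 * w p.2) := by
        rw [mul_sum]
        refine sum_congr rfl fun p hp => ?_
        rw [← Nat.cast_add, mem_antidiagonal.mp hp]
        push_cast
        ring
    _ = _ := by simp only [add_mul, sum_add_distrib, hfst, hsnd]

/-- The coefficient of `sⁿ` in `exp (γ s²)`. -/
noncomputable def expSqCoeff (γ : ℂ) (n : ℕ) : ℂ :=
  if Even n then γ ^ (n / 2) / (n / 2)! else 0

theorem expSqCoeff_two_mul (γ : ℂ) (k : ℕ) : expSqCoeff γ (2 * k) = γ ^ k / k ! := by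
  simp [expSqCoeff]

theorem expSqCoeff_two_mul_add_one (γ : ℂ) (k : ℕ) : expSqCoeff γ (2 * k + 1) = 0 := by
  simp [expSqCoeff]

theorem expSqCoeff_one (γ : ℂ) : expSqCoeff γ 1 = 0 := by
  simp [expSqCoeff]

theorem cast_add_two_mul_expSqCoeff (γ : ℂ) (n : ℕ) :
    ((n : ℂ) + 2) * expSqCoeff γ (n + 2) = 2 * γ * expSqCoeff γ n := by
  obtain ⟨k, rfl | rfl⟩ := Nat.even_or_odd' n
  · rw [show 2 * k + 2 = 2 * (k + 1) by ring, expSqCoeff_two_mul, expSqCoeff_two_mul,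
      Nat.factorial_succ]
    push_cast
    field_simp
    ring
  · rw [show 2 * k + 1 + 2 = 2 * (k + 1) + 1 by ring, expSqCoeff_two_mul_add_one,
      expSqCoeff_two_mul_add_one, mul_zero, mul_zero]

theorem hasSum_expSqCoeff_mul_pow (γ t : ℂ) :
    HasSum (fun n => expSqCoeff γ n * t ^ n) (Complex.exp (γ * t ^ 2)) := by
  rw [← add_zero (Complex.exp _), Complex.exp_eq_exp_ℂ]
  refine HasSum.even_add_odd ?_ ?_
  · have hterm : (fun k => expSqCoeff γ (2 * k) * t ^ (2 * k)) =
        fun k => (γ * t ^ 2) ^ k / k ! := by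
      funext k
      rw [expSqCoeff_two_mul, pow_mul, mul_pow]
      ring
    rw [hterm]
    exact NormedSpace.expSeries_div_hasSum_exp _
  · simp [expSqCoeff_two_mul_add_one]

theorem summable_norm_expSqCoeff_mul_pow (γ t : ℂ) :
    Summable fun n => ‖expSqCoeff γ n * t ^ n‖ := by
  refine Summable.even_add_odd ?_ ?_
  · convert NormedSpace.norm_expSeries_div_summable (γ * t ^ 2) using 2 with k
    rw [expSqCoeff_two_mul, pow_mul, mul_pow]
    ring_nf
  · simp [expSqCoeff_two_mul_add_one]

theorem hermite2_eq_factorial_mul_sum_antidiagonal (m : ℕ) (x y2 : ℝ) :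
    (hermite2 m x y2 : ℂ) =
      m ! * ∑ p ∈ antidiagonal m, (x : ℂ) ^ p.1 / p.1 ! * expSqCoeff (-y2 / 2) p.2 := by
  induction m using Nat.twoStepInduction with
  | zero => simp [hermite2, expSqCoeff]
  | one => simp [hermite2, Nat.sum_antidiagonal_succ, expSqCoeff]
  | more m ih₀ ih₁ =>
    have hu (j : ℕ) :
        ((j : ℂ) + 1) * ((x : ℂ) ^ (j + 1) / (j + 1)!) = x * ((x : ℂ) ^ j / j !) := by
      rw [Nat.factorial_succ]
      push_cast
      field_simp
      ring
    have hw (n : ℕ) : ((n : ℂ) + 2) * expSqCoeff (-y2 / 2) (n + 2) =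
        -y2 * expSqCoeff (-y2 / 2) n := by
      rw [cast_add_two_mul_expSqCoeff]
      ring
    have hrec := cast_add_two_mul_sum_antidiagonal (u := fun j => (x : ℂ) ^ j / j !) hu
      (expSqCoeff_one _) hw m
    rw [show (m + 2)! = (m + 2) * ((m + 1) * m !) by simp [Nat.factorial_succ]]
    simp only [hermite2]
    push_cast
    rw [ih₀, ih₁, Nat.factorial_succ]
    push_cast
    linear_combination (-((m : ℂ) + 1) * m !) * hrec

theorem HasSum.mul_antidiagonal_of_summable_norm {R : Type*} [NormedRing R] [CompleteSpace R]
    {f g : ℕ → R} {a b : R} (hf : HasSum f a) (hg : HasSum g b)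
    (hf' : Summable fun n => ‖f n‖) (hg' : Summable fun n => ‖g n‖) :
    HasSum (fun n => ∑ p ∈ antidiagonal n, f p.1 * g p.2) (a * b) := by
  rw [← hf.tsum_eq, ← hg.tsum_eq, tsum_mul_tsum_eq_tsum_sum_antidiagonal_of_summable_norm hf' hg']
  exact (summable_norm_sum_mul_antidiagonal_of_summable_norm hf' hg').of_norm.hasSum

theorem hasSum_hermite2 (t : ℂ) (x y2 : ℝ) :
    HasSum (fun m => t ^ m / m ! * hermite2 m x y2) (Complex.exp (t * x - t ^ 2 * y2 / 2)) := by
  have hexp : HasSum (fun j => (t * x) ^ j / j !) (Complex.exp (t * x)) := by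
    rw [Complex.exp_eq_exp_ℂ]
    exact NormedSpace.expSeries_div_hasSum_exp _
  have h := hexp.mul_antidiagonal_of_summable_norm (hasSum_expSqCoeff_mul_pow (-y2 / 2) t)
    (NormedSpace.norm_expSeries_div_summable _) (summable_norm_expSqCoeff_mul_pow _ _)
  rw [← Complex.exp_add, show t * x + -y2 / 2 * t ^ 2 = t * x - t ^ 2 * y2 / 2 by ring] at h
  refine h.congr_fun fun m => ?_
  rw [hermite2_eq_factorial_mul_sum_antidiagonal, ← mul_assoc,
    div_mul_cancel₀ _ (Nat.cast_ne_zero.mpr m.factorial_ne_zero), mul_sum]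
  refine sum_congr rfl fun p hp => ?_
  rw [← mem_antidiagonal.mp hp]
  ring

theorem hasSum_hermite2_I (x y2 : ℝ) :
    HasSum (fun m => Complex.I ^ m / m ! * hermite2 m x y2)
      (Complex.exp (Complex.I * x + y2 / 2)) := by
  convert hasSum_hermite2 Complex.I x y2 using 2
  rw [Complex.I_sq]
  ring

theorem continuous_hermite2 (m : ℕ) (y2 : ℝ) : Continuous fun x => hermite2 m x y2 := by
  induction m using Nat.twoStepInduction with
  | zero => exact continuous_const
  | one => exact continuous_id
  | more m ih₀ ih₁ => exact (continuous_id.mul ih₁).sub (continuous_const.mul ih₀)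

theorem abs_hermite2_le (m : ℕ) (x y2 : ℝ) : |hermite2 m x y2| ≤ hermite2 m |x| (-|y2|) := by
  induction m using Nat.twoStepInduction with
  | zero => simp [hermite2]
  | one => simp [hermite2]
  | more m ih₀ ih₁ =>
    simp only [hermite2]
    calc |x * hermite2 (m + 1) x y2 - (m + 1) * y2 * hermite2 m x y2|
        ≤ |x| * |hermite2 (m + 1) x y2| + (m + 1) * |y2| * |hermite2 m x y2| := by
          refine (abs_sub _ _).trans_eq ?_
          rw [abs_mul, abs_mul, abs_mul, abs_of_nonneg (by positivity : (0 : ℝ) ≤ m + 1)]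
      _ ≤ |x| * hermite2 (m + 1) |x| (-|y2|) + (m + 1) * |y2| * hermite2 m |x| (-|y2|) := by
          gcongr
      _ = |x| * hermite2 (m + 1) |x| (-|y2|) - (m + 1) * -|y2| * hermite2 m |x| (-|y2|) := by
          ring

theorem hasSum_hermite2_abs (x y2 : ℝ) :
    HasSum (fun m => hermite2 m |x| (-|y2|) / m !) (Real.exp (|x| + |y2| / 2)) := by
  rw [← Complex.hasSum_ofReal]
  convert hasSum_hermite2 1 |x| (-|y2|) using 1
  · funext m
    push_cast
    ring
  · push_cast
    ring_nf

theorem abs_dotProduct_le {ι : Type*} [Fintype ι] (z X : ι → ℝ) :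
    |z ⬝ᵥ X| ≤ (∑ i, |X i|) * ‖z‖ := by
  calc |z ⬝ᵥ X| ≤ ∑ i, |z i| * |X i| := by
        simpa only [dotProduct, abs_mul] using abs_sum_le_sum_abs (fun i => z i * X i) univ
    _ ≤ ∑ i, ‖z‖ * |X i| := by
        gcongr with i
        exact norm_le_pi_norm z i
    _ = (∑ i, |X i|) * ‖z‖ := by rw [← mul_sum, mul_comm]

theorem integrable_abs_mul_exp_abs_dotProduct {d : ℕ} {f : (Fin d → ℝ) → ℝ}
    (hdecay : ∀ c : ℝ, Integrable (fun z : Fin d → ℝ => f z * Real.exp (c * ‖z‖)))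
    (X : Fin d → ℝ) (a : ℝ) :
    Integrable fun z => |f z| * Real.exp (|z ⬝ᵥ X| + a) := by
  have hf : AEStronglyMeasurable f := by simpa using (hdecay 0).aestronglyMeasurable
  refine ((hdecay (∑ i, |X i|)).norm.mul_const (Real.exp a)).mono'
    (hf.norm.mul (by fun_prop : Continuous _).aestronglyMeasurable) (ae_of_all _ fun z => ?_)
  rw [Real.norm_eq_abs, abs_of_nonneg (by positivity), Real.exp_add, ← mul_assoc, norm_mul,
    Real.norm_eq_abs, Real.norm_eq_abs, Real.abs_exp]
  gcongr
  exact abs_dotProduct_le z X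

theorem hasSum_integral_mul_hermite2 {d : ℕ} {f : (Fin d → ℝ) → ℝ}
    (hdecay : ∀ c : ℝ, Integrable (fun z : Fin d → ℝ => f z * Real.exp (c * ‖z‖)))
    (X : Fin d → ℝ) :
    HasSum (fun m => ∫ z, Complex.I ^ m / m ! * ((f z * hermite2 m (z ⬝ᵥ X) (X ⬝ᵥ X) : ℝ) : ℂ))
      (∫ z, (f z : ℂ) * Complex.exp (Complex.I * (z ⬝ᵥ X : ℝ) + (X ⬝ᵥ X : ℝ) / 2)) := by
  have hf : AEStronglyMeasurable f := by simpa using (hdecay 0).aestronglyMeasurable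
  refine hasSum_integral_of_dominated_convergence
    (fun m z => |f z| * (hermite2 m |z ⬝ᵥ X| (-|X ⬝ᵥ X|) / m !))
    (fun m => (Complex.continuous_ofReal.comp_aestronglyMeasurable
      (hf.mul ((continuous_hermite2 m _).comp (by fun_prop)).aestronglyMeasurable)).const_mul _)
    (fun m => ae_of_all _ fun z => ?_)
    (ae_of_all _ fun z => ((hasSum_hermite2_abs _ _).mul_left _).summable)
    ((integrable_abs_mul_exp_abs_dotProduct hdecay X _).congr
      (ae_of_all _ fun z => ((hasSum_hermite2_abs _ _).mul_left _).tsum_eq.symm))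
    (ae_of_all _ fun z => ((hasSum_hermite2_I _ _).mul_left (f z : ℂ)).congr_fun fun m => ?_)
  · rw [norm_mul, norm_div, norm_pow, Complex.norm_I, one_pow, Complex.norm_natCast,
      Complex.norm_real, Real.norm_eq_abs, abs_mul, one_div_mul_eq_div, mul_div_assoc]
    gcongr
    exact abs_hermite2_le _ _ _
  · push_cast
    ring

/-- For a function `f : ℝ^d → ℝ` with sufficient decay, the adjusted characteristic
function `f̃(X) = ∫ f(z)·e^{i z·X + ‖X‖²/2} dz` equals
`Σ_m (i^m/m!)·h_{m,f}(X)` where `h_{m,f}(X) = ∫ f(z)·H_m(X,z) dz` and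
`H_m(X,z) = 𝓗_m(z·X, ‖X‖²)`. -/
theorem adjusted_char_function_series {d : ℕ} (f : (Fin d → ℝ) → ℝ)
    (hdecay : ∀ c : ℝ, Integrable (fun z : Fin d → ℝ => f z * Real.exp (c * ‖z‖)))
    (X : Fin d → ℝ) :
    (∫ z : Fin d → ℝ, (f z : ℂ) *
        Complex.exp (Complex.I * (dotProduct z X : ℝ)
          + (dotProduct X X : ℝ)/2))
      = ∑' m : ℕ, (Complex.I^m / (Nat.factorial m)) *
          ((∫ z : Fin d → ℝ,
            f z * hermite2 m (dotProduct z X) (dotProduct X X) : ℝ) : ℂ) := by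
  rw [← (hasSum_integral_mul_hermite2 hdecay X).tsum_eq]
  congr 1 with m
  rw [integral_const_mul, integral_complex_ofReal]
end

section
/- For every real number t and every nonnegative integer m, ∫_{-∞}^{∞} x^m · e^{-x²/2} · e^{-itx} dx = (-i)^m · √(2π) · e^{-t²/2} · 𝓗_m(t), where 𝓗_m is the m-th probabilist's Hermite polynomial. -/
/-- Probabilist's Hermite polynomials: `𝓗₀ = 1`, `𝓗₁(t) = t`,
`𝓗_m(t) = t·𝓗_{m-1}(t) − (m−1)·𝓗_{m-2}(t)`. -/
noncomputable def hermite1 : ℕ → ℝ → ℝ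
  | 0, _ => 1
  | 1, t => t
  | (m+2), t => t * hermite1 (m+1) t - (m+1 : ℝ) * hermite1 m t

/-!
Integrating by parts against `x e^{-x²/2} = -(e^{-x²/2})'` shows that the moments
`Mₙ(t) = ∫ xⁿ e^{-x²/2} e^{-itx} dx` satisfy `Mₙ₊₁ = n Mₙ₋₁ - i t Mₙ`. Writing `Mₙ = (-i)ⁿ M₀ 𝓗ₙ`
turns this into the Hermite recurrence, and `M₀(t) = √(2π) e^{-t²/2}` is the Fourier transform
of the Gaussian.
-/

open MeasureTheory Complex

noncomputable def gaussianMomentIntegrand (t : ℝ) (n : ℕ) (x : ℝ) : ℂ :=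
  (x : ℂ) ^ n * cexp (-(x : ℂ) ^ 2 / 2) * cexp (-I * t * x)

lemma integrable_pow_mul_cexp_neg_mul_sq {b : ℝ} (hb : 0 < b) (n : ℕ) :
    Integrable fun x : ℝ => (x : ℂ) ^ n * cexp (-b * (x : ℂ) ^ 2) := by
  have h := integrable_rpow_mul_exp_neg_mul_sq hb (s := n) (by linarith [n.cast_nonneg (α := ℝ)])
  refine h.ofReal.congr (ae_of_all _ fun x => ?_)
  simp [Real.rpow_natCast, ofReal_exp]

lemma integrable_gaussianMomentIntegrand (t : ℝ) (n : ℕ) :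
    Integrable (gaussianMomentIntegrand t n) := by
  have h := integrable_pow_mul_cexp_neg_mul_sq (b := 1 / 2) (by norm_num) n
  refine (h.mul_bdd (g := fun x : ℝ => cexp (-I * t * x)) (c := 1) (by fun_prop) ?_).congr ?_
  · exact ae_of_all _ fun x => by simp [norm_exp]
  · refine ae_of_all _ fun x => ?_
    simp only [gaussianMomentIntegrand]
    push_cast
    ring_nf

lemma integral_gaussianMomentIntegrand_zero (t : ℝ) :
    ∫ x, gaussianMomentIntegrand t 0 x = Real.sqrt (2 * Real.pi) * cexp (-(t : ℂ) ^ 2 / 2) := by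
  have h := fourierIntegral_gaussian (b := 1 / 2) (by norm_num) (-(t : ℂ))
  have hintegrand (x : ℝ) :
      cexp (I * -t * x) * cexp (-(1 / 2) * x ^ 2) = gaussianMomentIntegrand t 0 x := by
    simp only [gaussianMomentIntegrand]
    ring_nf
  have hsqrt : ((Real.pi : ℂ) / (1 / 2)) ^ (1 / 2 : ℂ) = Real.sqrt (2 * Real.pi) := by
    rw [Real.sqrt_eq_rpow, ofReal_cpow (by positivity)]
    push_cast
    ring_nf
  simp only [hintegrand, hsqrt] at h
  rw [h]
  ring_nf

lemma hasDerivAt_pow_mul_cexp_const_mul (n : ℕ) (c : ℂ) (x : ℝ) :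
    HasDerivAt (fun y : ℝ => (y : ℂ) ^ n * cexp (c * y))
      ((n * (x : ℂ) ^ (n - 1) + c * x ^ n) * cexp (c * x)) x := by
  have h := (hasDerivAt_pow n (x : ℂ)).mul ((hasDerivAt_id' (x : ℂ)).const_mul c).cexp
  exact (h.congr_deriv (by ring)).comp_ofReal

lemma hasDerivAt_neg_cexp_neg_sq_div_two (x : ℝ) :
    HasDerivAt (fun y : ℝ => -cexp (-(y : ℂ) ^ 2 / 2)) (x * cexp (-(x : ℂ) ^ 2 / 2)) x := by
  have h := (hasDerivAt_pow 2 (x : ℂ)).fun_neg.div_const 2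
  exact (h.cexp.neg.congr_deriv (by ring)).comp_ofReal

/-- At `n = 0` the truncated `n - 1` is harmless: its coefficient vanishes. -/
lemma integral_gaussianMomentIntegrand_succ (t : ℝ) (n : ℕ) :
    ∫ x, gaussianMomentIntegrand t (n + 1) x =
      n * (∫ x, gaussianMomentIntegrand t (n - 1) x) -
        I * t * ∫ x, gaussianMomentIntegrand t n x := by
  set g := gaussianMomentIntegrand t
  have hg := integrable_gaussianMomentIntegrand t
  have huv' (x : ℝ) :
      (x : ℂ) ^ n * cexp (-I * t * x) * (x * cexp (-(x : ℂ) ^ 2 / 2)) = g (n + 1) x := by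
    simp only [g, gaussianMomentIntegrand]; ring
  have hu'v (x : ℝ) : (n * (x : ℂ) ^ (n - 1) + -I * t * x ^ n) * cexp (-I * t * x) *
      -cexp (-(x : ℂ) ^ 2 / 2) = -(n * g (n - 1) x - I * t * g n x) := by
    simp only [g, gaussianMomentIntegrand]; ring
  have huv (x : ℝ) : (x : ℂ) ^ n * cexp (-I * t * x) * -cexp (-(x : ℂ) ^ 2 / 2) = -g n x := by
    simp only [g, gaussianMomentIntegrand]; ring
  have hg' : Integrable fun x => n * g (n - 1) x - I * t * g n x :=
    ((hg (n - 1)).const_mul _).sub ((hg n).const_mul _)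
  have key := integral_mul_deriv_eq_deriv_mul_of_integrable
    (fun x _ => hasDerivAt_pow_mul_cexp_const_mul n (-I * t) x)
    (fun x _ => hasDerivAt_neg_cexp_neg_sq_div_two x)
    ((hg (n + 1)).congr (ae_of_all _ fun x => (huv' x).symm))
    (hg'.neg.congr (ae_of_all _ fun x => (hu'v x).symm))
    ((hg n).neg.congr (ae_of_all _ fun x => (huv x).symm))
  simp only [huv', hu'v] at key
  rw [key, integral_neg, neg_neg, integral_sub ((hg (n - 1)).const_mul _) ((hg n).const_mul _),
    integral_const_mul, integral_const_mul]

lemma neg_I_pow_mul_hermite1_add_two (n : ℕ) (t : ℝ) :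
    (-I) ^ (n + 2) * (hermite1 (n + 2) t : ℂ) =
      (n + 1) * ((-I) ^ n * hermite1 n t) - I * t * ((-I) ^ (n + 1) * hermite1 (n + 1) t) := by
  simp only [hermite1]
  push_cast
  ring_nf
  simp only [I_sq]
  ring

/-- `∫ x^m e^{−x²/2} e^{−itx} dx = (−i)^m √(2π) e^{−t²/2} 𝓗_m(t)`. -/
theorem hermite_fourier_transform (t : ℝ) (m : ℕ) :
    ∫ x : ℝ, (x : ℂ)^m * Complex.exp (-(x:ℂ)^2/2) * Complex.exp (-Complex.I * t * x) =
      (-Complex.I)^m * Real.sqrt (2 * Real.pi) * Complex.exp (-(t:ℂ)^2/2) *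
        (hermite1 m t : ℂ) := by
  suffices h : ∀ m, ∫ x, gaussianMomentIntegrand t m x =
      Real.sqrt (2 * Real.pi) * cexp (-(t : ℂ) ^ 2 / 2) * ((-I) ^ m * hermite1 m t) from
    (h m).trans (by ring)
  intro m
  induction m using Nat.twoStepInduction with
  | zero => simpa [hermite1] using integral_gaussianMomentIntegrand_zero t
  | one =>
    rw [integral_gaussianMomentIntegrand_succ, integral_gaussianMomentIntegrand_zero]
    simp only [hermite1]
    push_cast
    ring
  | more n ih₀ ih₁ =>
    rw [integral_gaussianMomentIntegrand_succ, Nat.add_sub_cancel, ih₀, ih₁,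
      neg_I_pow_mul_hermite1_add_two]
    push_cast
    ring
end
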